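/- arXiv:1308.6329 — 2 statements merged into one kernel-verified Lean document; each statement's English description precedes it below -/
import Mathlib

section
/- For $t > 0$, $\lim_{t \to +\infty} e^{-t} \sum_{n=1}^{\infty} \left| \frac{t^{n-1}}{(n-1)!} - \frac{t^n}{n!} \right| = 0$. -/
/-!
Write `a n = t ^ n / n!`. Since `a (n + 1) = a n * (t / (n + 1))`, the sequence increases up to the
mode `m = ⌊t⌋` and then decreases to `0`, so the series of `|a n - a (n + 1)|` telescopes on both
sides of the mode to `2 a m - a 0`. By Stirling's lower bound for `m!` and the fact that
`x ↦ x ^ m e^{-x}` is maximal at `x = m`, the Poisson weight `e^{-t} a m` is at most `1 / √(2πm)`.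
-/

open Filter Finset Real Topology
open scoped Nat

lemma hasSum_sub_succ_of_antitone {f : ℕ → ℝ} {l : ℝ} (hf : Antitone f)
    (hlim : Tendsto f atTop (𝓝 l)) : HasSum (fun n ↦ f n - f (n + 1)) (f 0 - l) := by
  rw [hasSum_iff_tendsto_nat_of_nonneg fun n ↦ sub_nonneg.2 (hf n.le_succ)]
  simp_rw [sum_range_sub']
  exact tendsto_const_nhds.sub hlim

lemma hasSum_abs_sub_succ_of_unimodal {a : ℕ → ℝ} {m : ℕ} (hup : ∀ n < m, a n ≤ a (n + 1))
    (hdown : ∀ n, m ≤ n → a (n + 1) ≤ a n) (hlim : Tendsto a atTop (𝓝 0)) :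
    HasSum (fun n ↦ |a n - a (n + 1)|) (2 * a m - a 0) := by
  have head : ∑ i ∈ range m, |a i - a (i + 1)| = a m - a 0 := by
    rw [← sum_range_sub]
    refine sum_congr rfl fun i hi ↦ ?_
    rw [abs_sub_comm, abs_of_nonneg (sub_nonneg.2 (hup i (mem_range.1 hi)))]
  have tail : HasSum (fun n ↦ a (n + m) - a (n + m + 1)) (a m) := by
    have hanti : Antitone fun n ↦ a (n + m) :=
      antitone_nat_of_succ_le fun n ↦ by simpa [add_right_comm] using hdown (n + m) le_add_self
    simpa [add_right_comm] using
      hasSum_sub_succ_of_antitone hanti (hlim.comp (tendsto_add_atTop_nat m))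
  rw [← hasSum_nat_add_iff' m, head, show 2 * a m - a 0 - (a m - a 0) = a m by ring]
  have habs : (fun n ↦ |a (n + m) - a (n + m + 1)|) = fun n ↦ a (n + m) - a (n + m + 1) :=
    funext fun n ↦ abs_of_nonneg (sub_nonneg.2 (hdown (n + m) le_add_self))
  exact habs ▸ tail

lemma pow_succ_div_factorial_succ (t : ℝ) (n : ℕ) :
    t ^ (n + 1) / (n + 1)! = t ^ n / n ! * (t / (n + 1)) := by
  rw [Nat.factorial_succ]
  push_cast
  rw [div_mul_div_comm, pow_succ, mul_comm (n + 1 : ℝ)]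

lemma tsum_abs_pow_div_factorial_sub_succ {t : ℝ} (ht : 0 ≤ t) :
    ∑' n : ℕ, |t ^ n / (n !) - t ^ (n + 1) / (n + 1)!| = 2 * (t ^ ⌊t⌋₊ / ⌊t⌋₊ !) - 1 := by
  have hnonneg (n : ℕ) : 0 ≤ t ^ n / n ! := by positivity
  refine (hasSum_abs_sub_succ_of_unimodal (m := ⌊t⌋₊) (fun n hn ↦ ?_) (fun n hn ↦ ?_)
    (FloorSemiring.tendsto_pow_div_factorial_atTop t)).tsum_eq.trans (by simp)
  · have : (n : ℝ) + 1 ≤ t := by exact_mod_cast (Nat.le_floor_iff ht).1 hn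
    rw [pow_succ_div_factorial_succ]
    exact le_mul_of_one_le_right (hnonneg n) ((one_le_div (by positivity)).2 this)
  · have : t ≤ (n : ℝ) + 1 :=
      (Nat.lt_floor_add_one t).le.trans (by exact_mod_cast Nat.succ_le_succ hn)
    rw [pow_succ_div_factorial_succ]
    exact mul_le_of_le_one_right (hnonneg n) ((div_le_one (by positivity)).2 this)

lemma pow_mul_exp_neg_le_pow_mul_exp_neg (n : ℕ) {x : ℝ} (hx : 0 ≤ x) :
    x ^ n * exp (-x) ≤ n ^ n * exp (-n) := by
  rcases Nat.eq_zero_or_pos n with rfl | hn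
  · simpa using hx
  have hn' : (0 : ℝ) < n := by exact_mod_cast hn
  have key : x / n ≤ exp (x / n - 1) := by linarith [add_one_le_exp (x / n - 1)]
  calc x ^ n * exp (-x) = n ^ n * (x / n) ^ n * exp (-x) := by
        rw [div_pow, mul_div_cancel₀ _ (by positivity)]
    _ ≤ n ^ n * exp (x / n - 1) ^ n * exp (-x) := by gcongr
    _ = n ^ n * exp (-n) := by
        rw [← exp_nat_mul, mul_assoc, ← exp_add]
        congr 2
        field_simp
        ring

lemma exp_neg_mul_pow_div_factorial_le {x : ℝ} (hx : 0 ≤ x) {n : ℕ} (hn : n ≠ 0) :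
    exp (-x) * x ^ n / n ! ≤ (√(2 * π * n))⁻¹ := by
  have hsqrt : 0 < √(2 * π * n) := by positivity
  rw [div_le_iff₀ (by positivity), inv_mul_eq_div, le_div_iff₀ hsqrt]
  calc exp (-x) * x ^ n * √(2 * π * n) ≤ n ^ n * exp (-n) * √(2 * π * n) := by
        rw [mul_comm (exp _)]
        gcongr ?_ * _
        exact pow_mul_exp_neg_le_pow_mul_exp_neg n hx
    _ = √(2 * π * n) * (n / exp 1) ^ n := by
        rw [div_pow, ← exp_nat_mul, mul_one, exp_neg]
        ring
    _ ≤ n ! := Stirling.le_factorial_stirling n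

lemma tendsto_inv_sqrt_two_pi_floor :
    Tendsto (fun t : ℝ ↦ (√(2 * π * ⌊t⌋₊))⁻¹) atTop (𝓝 0) :=
  (tendsto_sqrt_atTop.comp <| (tendsto_natCast_atTop_atTop.comp
    tendsto_nat_floor_atTop).const_mul_atTop (by positivity)).inv_tendsto_atTop

/-- `lim_{t → +∞} e^{-t} ∑_{n=1}^∞ |t^{n-1}/(n-1)! - t^n/n!| = 0`. -/
theorem stmt_1 :
    Tendsto (fun t : ℝ =>
        Real.exp (-t) *
          ∑' n : ℕ, |t ^ n / (n.factorial : ℝ) - t ^ (n + 1) / ((n + 1).factorial : ℝ)|)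
      atTop (nhds 0) := by
  refine tendsto_of_tendsto_of_tendsto_of_le_of_le' tendsto_const_nhds
    (by simpa only [mul_zero] using tendsto_inv_sqrt_two_pi_floor.const_mul 2) ?_ ?_
  · exact Eventually.of_forall fun t ↦ mul_nonneg (exp_pos _).le (tsum_nonneg fun _ ↦ abs_nonneg _)
  filter_upwards [eventually_ge_atTop 1] with t ht
  have hfloor : ⌊t⌋₊ ≠ 0 := Nat.one_le_iff_ne_zero.1 ((Nat.one_le_floor_iff t).2 ht)
  rw [tsum_abs_pow_div_factorial_sub_succ (by linarith)]
  calc exp (-t) * (2 * (t ^ ⌊t⌋₊ / ⌊t⌋₊ !) - 1) ≤ 2 * (exp (-t) * t ^ ⌊t⌋₊ / ⌊t⌋₊ !) := by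
        rw [mul_div_assoc]
        nlinarith [exp_pos (-t)]
    _ ≤ 2 * (√(2 * π * ⌊t⌋₊))⁻¹ := by
        gcongr
        exact exp_neg_mul_pow_div_factorial_le (by linarith) hfloor
end

section
/- Let $\{M^{(n)}\}_{n=1}^{\infty}$ be a tight family of probability measures on $\mathbb{Z}$, each having finite 4th moment. If the sequence of second moments $\langle k^2 \rangle_{M^{(n)}} = \sum_{k} k^2 M^{(n)}(k)$ diverges to infinity, then the sequence $\langle k^4 \rangle_{M^{(n)}} / \langle k^2 \rangle_{M^{(n)}}^2$ also diverges to infinity. -/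
open Filter

/-- For a tight family of probability measures `M n` on `ℤ` with finite 4th
moments, if the second moments diverge to infinity, then `⟨k⁴⟩/⟨k²⟩²` diverges too. -/
theorem stmt_3 (M : ℕ → ℤ → ℝ)
    (hnonneg : ∀ n k, 0 ≤ M n k)
    (hsummable : ∀ n, Summable (M n))
    (hprob : ∀ n, ∑' k : ℤ, M n k = 1)
    (hmom4 : ∀ n, Summable (fun k : ℤ => (k : ℝ) ^ 4 * M n k))
    (htight : ∀ ε : ℝ, 0 < ε → ∃ R : ℕ, ∀ n,
      (∑' k : ℤ, if (R : ℤ) < |k| then M n k else 0) < ε)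
    (hdiv : Tendsto (fun n => ∑' k : ℤ, (k : ℝ) ^ 2 * M n k) atTop atTop) :
    Tendsto (fun n =>
        (∑' k : ℤ, (k : ℝ) ^ 4 * M n k) / (∑' k : ℤ, (k : ℝ) ^ 2 * M n k) ^ 2)
      atTop atTop := by
  rw [tendsto_atTop]
  intro b
  set C := max b 1 with hC
  have hC1 : (1:ℝ) ≤ C := le_max_right _ _
  have hCpos : (0:ℝ) < C := lt_of_lt_of_le one_pos hC1
  have hbC : b ≤ C := le_max_left _ _
  obtain ⟨R, hR⟩ := htight (1/(16*C)) (by positivity)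
  have hev : ∀ᶠ n in atTop, 4*((R:ℝ)^2+1) ≤ ∑' k : ℤ, (k : ℝ) ^ 2 * M n k :=
    hdiv.eventually_ge_atTop _
  filter_upwards [hev] with n hn
  set S2 := ∑' k : ℤ, (k : ℝ) ^ 2 * M n k with hS2
  set S4 := ∑' k : ℤ, (k : ℝ) ^ 4 * M n k with hS4
  have hS2pos : (0:ℝ) < S2 := by nlinarith [sq_nonneg (R:ℝ)]
  have hLpos : (0:ℝ) < 4*C*S2 := by positivity
  have hsum2 : Summable (fun k : ℤ => (k:ℝ)^2 * M n k) := by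
    apply Summable.of_nonneg_of_le (fun k => mul_nonneg (by positivity) (hnonneg n k))
      (fun k => ?_) ((hsummable n).add (hmom4 n))
    have h1 : (k:ℝ)^2 ≤ 1 + (k:ℝ)^4 := by nlinarith [sq_nonneg ((k:ℝ)^2 - 1)]
    have h2 := hnonneg n k
    show (k:ℝ)^2 * M n k ≤ M n k + (k:ℝ)^4 * M n k
    nlinarith
  have hsumInd : Summable (fun k : ℤ => if (R:ℤ) < |k| then M n k else 0) := by
    apply Summable.of_nonneg_of_le (fun k => ?_) (fun k => ?_) (hsummable n)
    · split <;> simp [hnonneg n k]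
    · split <;> simp [hnonneg n k]
  -- key pointwise bound
  have key : ∀ k : ℤ, (k:ℝ)^2 * M n k ≤
      (R:ℝ)^2 * M n k + (4*C*S2) * (if (R:ℤ) < |k| then M n k else 0)
        + (k:ℝ)^4 * M n k / (4*C*S2) := by
    intro k
    have hM := hnonneg n k
    have h4 : (0:ℝ) ≤ (k:ℝ)^4 * M n k / (4*C*S2) := by positivity
    by_cases h : (R:ℤ) < |k|
    · rw [if_pos h]
      rcases le_or_gt ((k:ℝ)^2) (4*C*S2) with h2 | h2
      · nlinarith [sq_nonneg (R:ℝ)]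
      · have hk4 : (k:ℝ)^2 ≤ (k:ℝ)^4 / (4*C*S2) := by
          rw [le_div_iff₀ hLpos]
          nlinarith [sq_nonneg ((k:ℝ))]
        have : (k:ℝ)^2 * M n k ≤ ((k:ℝ)^4 / (4*C*S2)) * M n k :=
          mul_le_mul_of_nonneg_right hk4 hM
        have heq : ((k:ℝ)^4 / (4*C*S2)) * M n k = (k:ℝ)^4 * M n k / (4*C*S2) := by
          ring
        nlinarith [mul_nonneg (sq_nonneg (R:ℝ)) hM, mul_nonneg hLpos.le hM]
    · rw [if_neg h]
      have hk : |k| ≤ (R:ℤ) := not_lt.1 h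
      have hkR : |(k:ℝ)| ≤ (R:ℝ) := by exact_mod_cast hk
      have hk2 : (k:ℝ)^2 ≤ (R:ℝ)^2 := by
        rw [← sq_abs (k:ℝ)]
        exact pow_le_pow_left₀ (abs_nonneg _) hkR 2
      nlinarith [mul_le_mul_of_nonneg_right hk2 hM]
  -- sum the pointwise bound
  have hsA : Summable (fun k : ℤ => (R:ℝ)^2 * M n k) := (hsummable n).mul_left _
  have hsB : Summable (fun k : ℤ =>
      (4*C*S2) * (if (R:ℤ) < |k| then M n k else 0)) := hsumInd.mul_left _
  have hsD : Summable (fun k : ℤ => (k:ℝ)^4 * M n k / (4*C*S2)) :=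
    (hmom4 n).div_const _
  have hsum_le : S2 ≤ (R:ℝ)^2 + (4*C*S2) * (∑' k : ℤ, if (R:ℤ) < |k| then M n k else 0)
      + S4 / (4*C*S2) := by
    have := Summable.tsum_le_tsum key hsum2 ((hsA.add hsB).add hsD)
    rw [Summable.tsum_add (hsA.add hsB) hsD, Summable.tsum_add hsA hsB, tsum_mul_left, tsum_mul_left,
      hprob n, tsum_div_const] at this
    simpa using this
  have hTind : (∑' k : ℤ, if (R:ℤ) < |k| then M n k else 0) < 1/(16*C) := hR n
  have hTind0 : 0 ≤ (∑' k : ℤ, if (R:ℤ) < |k| then M n k else 0) :=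
    tsum_nonneg (fun k => by split <;> simp [hnonneg n k])
  have hBle : (4*C*S2) * (∑' k : ℤ, if (R:ℤ) < |k| then M n k else 0) ≤ S2/4 := by
    have := mul_le_mul_of_nonneg_left hTind.le hLpos.le
    calc (4*C*S2) * (∑' k : ℤ, if (R:ℤ) < |k| then M n k else 0)
        ≤ (4*C*S2) * (1/(16*C)) := this
      _ = S2/4 := by field_simp; ring
  -- conclude S4 ≥ 2*C*S2^2
  have hS4big : 2*C*S2^2 ≤ S4 := by
    have h1 : S2 - (R:ℝ)^2 - S2/4 ≤ S4 / (4*C*S2) := by linarith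
    have h2 : S2/2 ≤ S4 / (4*C*S2) := by nlinarith
    have := (le_div_iff₀ hLpos).1 h2
    nlinarith
  have hS2sq : (0:ℝ) < S2^2 := by positivity
  rw [le_div_iff₀ hS2sq]
  nlinarith [sq_nonneg S2]
end
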